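/- Let f be a homeomorphism of a compact metric space M and let K ⊂ M be an infinite compact f-invariant set such that the restriction f|_K is nonwandering (every point of K is nonwandering for f|_K), expansive, and has the shadowing property. Then the topological entropy of f is positive; indeed h(f, K) > 0. -/

import Mathlib

open Dynamics

/-- Topological entropy of `T` on the subset `F`, defined through maximal cardinalities of
`(n, U)`-separated sets (dynamical nets): `h(T, F) = ⨆ U ∈ 𝓤 X, netEntropyEntourage T F U`.
On a metric space this is the usual entropy
`lim_{ε → 0} limsup_n (1/n) log S(n, ε, F)` via separated sets; `h(T) = h(T, univ)`. -/
noncomputable def netEntropy {X : Type*} [UniformSpace X] (T : X → X) (F : Set X) : EReal :=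
  ⨆ U ∈ uniformity X, netEntropyEntourage T F U

/-- The iterate `f^m` of a homeomorphism `f`, for `m : ℤ`, as a bijection of `M`. -/
noncomputable def zIter {M : Type*} [TopologicalSpace M] (f : M ≃ₜ M) (m : ℤ) : M → M :=
  ⇑(f.toEquiv ^ m)

/-- Every point of `K` is nonwandering for `f` restricted to `K`: for every neighborhood
`U` of `x` (in `K`) there are `m > 0` and `y ∈ K ∩ U` with `f^[m] y ∈ U`. -/
def NonwanderingOn {M : Type*} [TopologicalSpace M] (f : M → M) (K : Set M) : Prop :=
  ∀ x ∈ K, ∀ U : Set M, IsOpen U → x ∈ U →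
    ∃ m : ℕ, 0 < m ∧ ∃ y ∈ K ∩ U, f^[m] y ∈ U

/-- `f` restricted to `K` is expansive: there is `e > 0` such that any two distinct points
of `K` are separated beyond `e` by some iterate `f^m`, `m : ℤ`. -/
def ExpansiveOn {M : Type*} [MetricSpace M] (f : M ≃ₜ M) (K : Set M) : Prop :=
  ∃ e > (0 : ℝ), ∀ x ∈ K, ∀ y ∈ K, x ≠ y →
    ∃ m : ℤ, e < dist (zIter f m x) (zIter f m y)

/-- `f` restricted to `K` has the shadowing property: for every `ε > 0` there is `δ > 0`
such that every `δ`-pseudo-orbit in `K` is `ε`-shadowed by some point of `K`. -/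
def ShadowingOn {M : Type*} [MetricSpace M] (f : M ≃ₜ M) (K : Set M) : Prop :=
  ∀ ε > (0 : ℝ), ∃ δ > (0 : ℝ), ∀ x : ℤ → M, (∀ m : ℤ, x m ∈ K) →
    (∀ m : ℤ, dist (f (x m)) (x (m + 1)) ≤ δ) →
    ∃ y ∈ K, ∀ m : ℤ, dist (zIter f m y) (x m) ≤ ε

section ZIterAux
variable {M : Type*} [TopologicalSpace M] (f : M ≃ₜ M)

lemma zIter_add (a b : ℤ) (x : M) : zIter f (a + b) x = zIter f a (zIter f b x) := by
  simp [zIter, zpow_add, Equiv.Perm.mul_apply]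

lemma zIter_natCast (n : ℕ) (x : M) : zIter f (n : ℤ) x = f^[n] x := by
  simp only [zIter, zpow_natCast]
  induction n with
  | zero => simp
  | succ k ih =>
      rw [pow_succ', Function.iterate_succ_apply', ← ih]
      simp [Equiv.Perm.mul_apply]

lemma zIter_fixed {p : M} {N : ℕ} (hp : f^[N] p = p) (t : ℤ) : zIter f ((N : ℤ) * t) p = p := by
  have h1 : (f.toEquiv ^ (N : ℤ)) p = p := by
    rw [show ((f.toEquiv ^ (N:ℤ)) p) = zIter f (N : ℤ) p from rfl, zIter_natCast, hp]
  have : ((f.toEquiv ^ (N : ℤ)) ^ t) p = p :=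
    Equiv.Perm.zpow_apply_eq_self_of_apply_eq_self h1 t
  rw [show zIter f ((N:ℤ)*t) p = ((f.toEquiv) ^ ((N:ℤ)*t)) p from rfl, zpow_mul]
  exact this

lemma zIter_emod {p : M} {N : ℕ} (hp : f^[N] p = p) (k : ℤ) :
    zIter f k p = zIter f (k % (N : ℤ)) p := by
  conv_lhs => rw [show k = k % (N:ℤ) + (N:ℤ) * (k / (N:ℤ)) by rw [Int.emod_add_mul_ediv]]
  rw [zIter_add, zIter_fixed f hp]

lemma zIter_mem {K : Set M} (hKinv : ⇑f '' K = K) {x : M} (hx : x ∈ K) (m : ℤ) :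
    zIter f m x ∈ K := by
  have hfwd : ∀ y ∈ K, f y ∈ K := fun y hy => hKinv ▸ Set.mem_image_of_mem f hy
  have hbwd : ∀ y ∈ K, f.symm y ∈ K := by
    intro y hy
    rw [← hKinv] at hy
    obtain ⟨z, hz, rfl⟩ := hy
    simpa using hz
  induction m using Int.induction_on with
  | zero => simpa [zIter] using hx
  | succ n ih =>
      rw [show ((n:ℤ)+1) = 1 + (n:ℤ) by ring, zIter_add]
      have := hfwd _ ih
      simpa [zIter] using this
  | pred n ih =>
      rw [show (-(n:ℤ)-1) = (-1) + (-(n:ℤ)) by ring, zIter_add]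
      have := hbwd _ ih
      have h : zIter f (-1) (zIter f (-n) x) = f.symm (zIter f (-n) x) := by
        simp [zIter]
      rw [h]
      exact this

end ZIterAux

lemma iter_mem {M : Type*} [TopologicalSpace M] (f : M ≃ₜ M) {K : Set M}
    (hKinv : ⇑f '' K = K) {x : M} (hx : x ∈ K) (j : ℕ) : f^[j] x ∈ K := by
  rw [← zIter_natCast]; exact zIter_mem f hKinv hx j

lemma zIter_zero {M : Type*} [TopologicalSpace M] (f : M ≃ₜ M) (x : M) : zIter f 0 x = x := by
  rw [show (0:ℤ) = ((0:ℕ):ℤ) by norm_num, zIter_natCast]; rfl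

lemma emod_succ (n m : ℤ) (hm : 0 < m) :
    ((n+1) % m = n % m + 1 ∧ n % m + 1 < m) ∨ ((n+1) % m = 0 ∧ n % m + 1 = m) := by
  have h1 : n + 1 = m * (n / m) + (n % m + 1) := by
    have := Int.mul_ediv_add_emod n m; linarith
  have hnn := Int.emod_nonneg n (ne_of_gt hm)
  have hlt := Int.emod_lt_of_pos n hm
  rcases lt_or_eq_of_le (by omega : n % m + 1 ≤ m) with h | h
  · left
    constructor
    · rw [h1, add_comm (m * (n/m)), Int.add_mul_emod_self_left, Int.emod_eq_of_lt (by omega) h]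
    · exact h
  · right
    constructor
    · rw [h1, add_comm (m * (n/m)), Int.add_mul_emod_self_left, h, Int.emod_self]
    · exact h


lemma periodic_dense {M : Type*} [MetricSpace M] (f : M ≃ₜ M) (K : Set M)
    (hKinv : ⇑f '' K = K) (hnw : NonwanderingOn (⇑f) K)
    {e : ℝ} (he : 0 < e)
    (hexp' : ∀ x ∈ K, ∀ y ∈ K, x ≠ y → ∃ m : ℤ, e < dist (zIter f m x) (zIter f m y))
    (hsh : ∀ ε > (0 : ℝ), ∃ δ > (0 : ℝ), ∀ x : ℤ → M, (∀ m : ℤ, x m ∈ K) →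
      (∀ m : ℤ, dist (f (x m)) (x (m + 1)) ≤ δ) →
      ∃ y ∈ K, ∀ m : ℤ, dist (zIter f m y) (x m) ≤ ε)
    {x : M} (hx : x ∈ K) {α : ℝ} (hα : 0 < α) :
    ∃ p ∈ K, (∃ m : ℕ, 0 < m ∧ f^[m] p = p) ∧ dist p x ≤ α := by
  set ε : ℝ := min (α/2) (e/3) with hεdef
  have hε : 0 < ε := lt_min (by linarith) (by linarith)
  obtain ⟨δ, hδ, hshad⟩ := hsh ε hε
  set β : ℝ := min (δ/2) (α/2) with hβdef
  have hβ : 0 < β := lt_min (by linarith) (by linarith)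
  obtain ⟨m, hm, y, ⟨hyK, hyball⟩, hfm⟩ :=
    hnw x hx (Metric.ball x β) Metric.isOpen_ball (Metric.mem_ball_self hβ)
  have hmz : (0 : ℤ) < (m : ℤ) := by exact_mod_cast hm
  set X : ℤ → M := fun n => f^[(n % (m : ℤ)).toNat] y with hXdef
  have hXmem : ∀ n : ℤ, X n ∈ K := fun n => iter_mem f hKinv hyK _
  have hmodnn : ∀ n : ℤ, 0 ≤ n % (m:ℤ) := fun n => Int.emod_nonneg n (by positivity)
  have hXper : ∀ n : ℤ, X (n + m) = X n := by
    intro n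
    simp only [hXdef]
    congr 2
    rw [show n + (m:ℤ) = n + (m:ℤ)*1 by ring, Int.add_mul_emod_self_left]
  have hjump : ∀ n : ℤ, dist (f (X n)) (X (n+1)) ≤ δ := by
    intro n
    have h1 : f (X n) = f^[(n % (m:ℤ)).toNat + 1] y := by
      rw [hXdef, ← Function.iterate_succ_apply' f]
    rcases emod_succ n m hmz with ⟨h2, h3⟩ | ⟨h2, h3⟩
    · have : X (n+1) = f^[(n % (m:ℤ)).toNat + 1] y := by
        simp only [hXdef, h2]
        congr 1
        have := hmodnn n
        omega
      rw [this, h1, dist_self]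
      exact le_of_lt hδ
    · have h4 : X (n+1) = y := by simp only [hXdef, h2]; rfl
      have h5 : f (X n) = f^[m] y := by
        rw [h1]; congr 1; omega
      rw [h4, h5]
      calc dist (f^[m] y) y ≤ dist (f^[m] y) x + dist x y := dist_triangle _ _ _
        _ ≤ β + β := by
            have h6 := Metric.mem_ball.mp hfm
            have h7 := Metric.mem_ball.mp hyball
            rw [dist_comm x y]
            have : dist (f^[m] y) x ≤ β := le_of_lt h6
            have : dist y x ≤ β := le_of_lt h7
            gcongr <;> assumption
        _ ≤ δ := by
            have : β ≤ δ/2 := min_le_left _ _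
            linarith
  obtain ⟨p, hpK, hp⟩ := hshad X hXmem hjump
  have hper : zIter f m p = p := by
    by_contra hne
    obtain ⟨n, hn⟩ := hexp' _ (zIter_mem f hKinv hpK m) _ hpK (fun h => hne h)
    have h1 : dist (zIter f n (zIter f (m:ℤ) p)) (X n) ≤ ε := by
      rw [← zIter_add]
      calc dist (zIter f (n + m) p) (X n) = dist (zIter f (n+m) p) (X (n+m)) := by rw [hXper]
        _ ≤ ε := hp _
    have h2 := hp n
    have h8 : dist (zIter f n (zIter f (m:ℤ) p)) (zIter f n p) ≤ 2 * ε :=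
      calc dist (zIter f n (zIter f (m:ℤ) p)) (zIter f n p)
          ≤ dist (zIter f n (zIter f (m:ℤ) p)) (X n) + dist (zIter f n p) (X n) := by
            rw [dist_comm (zIter f n p)]; exact dist_triangle _ _ _
        _ ≤ 2 * ε := by linarith
    have hεe : ε ≤ e/3 := min_le_right _ _
    linarith
  refine ⟨p, hpK, ⟨m, hm, ?_⟩, ?_⟩
  · rw [← zIter_natCast]; exact hper
  · have h0 : dist p (X 0) ≤ ε := by
      have := hp 0
      rwa [zIter_zero] at this
    have hX0 : X 0 = y := by simp only [hXdef]; rfl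
    rw [hX0] at h0
    have h7 := le_of_lt (Metric.mem_ball.mp hyball)
    calc dist p x ≤ dist p y + dist y x := dist_triangle _ _ _
      _ ≤ ε + β := add_le_add h0 h7
      _ ≤ α/2 + α/2 := add_le_add (min_le_left _ _) (min_le_right _ _)
      _ = α := by ring

lemma close_pair {M : Type*} [MetricSpace M] {P K : Set M} (hPK : P ⊆ K)
    (hKcomp : IsCompact K) (hPinf : P.Infinite) {ρ : ℝ} (hρ : 0 < ρ) :
    ∃ p ∈ P, ∃ q ∈ P, p ≠ q ∧ dist p q ≤ ρ := by
  obtain ⟨z, hzK, hz⟩ := hPinf.exists_accPt_of_subset_isCompact hKcomp hPK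
  rw [accPt_iff_nhds] at hz
  obtain ⟨p, ⟨hp1, hp2⟩, hp3⟩ := hz (Metric.ball z (ρ/2)) (Metric.ball_mem_nhds z (by linarith))
  have hdzp : 0 < dist p z := dist_pos.mpr hp3
  obtain ⟨q, ⟨hq1, hq2⟩, hq3⟩ := hz (Metric.ball z (min (ρ/2) (dist p z)))
    (Metric.ball_mem_nhds z (lt_min (by linarith) hdzp))
  refine ⟨p, hp2, q, hq2, ?_, ?_⟩
  · intro h
    rw [← h] at hq1
    have := Metric.mem_ball.mp hq1
    have h2 := min_le_right (ρ/2) (dist p z)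
    linarith
  · have h1 := Metric.mem_ball.mp hp1
    have h2 := Metric.mem_ball.mp hq1
    have h3 := min_le_left (ρ/2) (dist p z)
    calc dist p q ≤ dist p z + dist z q := dist_triangle _ _ _
      _ ≤ ρ/2 + ρ/2 := by rw [dist_comm z q]; gcongr <;> linarith
      _ = ρ := by ring

-- entropy lower bound from exponential net growth
lemma entropy_bound {X : Type*} [UniformSpace X] (T : X → X) (F : Set X)
    (U : Set (X × X)) (N : ℕ) (hN : 0 < N)
    (hcard : ∀ J : ℕ, (2^J : ℕ∞) ≤ netMaxcard T F U (N * J)) :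
    ((Real.log 2 / (2 * N) : ℝ) : EReal) ≤ netEntropyEntourage T F U := by
  apply Filter.le_limsup_of_frequently_le'
  apply Filter.Eventually.frequently
  rw [Filter.eventually_atTop]
  refine ⟨N, fun n hn => ?_⟩
  set J := n / N with hJ
  have hJ1 : 1 ≤ J := (Nat.one_le_div_iff hN).mpr hn
  have hNJ : N * J ≤ n := Nat.mul_div_le n N
  have h1 : (2^J : ℕ∞) ≤ netMaxcard T F U n :=
    le_trans (hcard J) (netMaxcard_monotone_time T F U hNJ)
  have h2 : ((J : EReal)) * ENNReal.log 2 ≤ ENNReal.log (netMaxcard T F U n) := by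
    rw [← ENNReal.log_pow]
    apply ENNReal.log_monotone
    calc (2:ENNReal)^J = (((2:ℕ∞)^J : ℕ∞) : ENNReal) := by
          rw [ENat.toENNReal_pow]; rfl
      _ ≤ ((netMaxcard T F U n : ℕ∞) : ENNReal) := ENat.toENNReal_mono h1
  have hlog2 : ENNReal.log 2 = ((Real.log 2 : ℝ) : EReal) := by
    rw [show (2:ENNReal) = ENNReal.ofReal 2 by norm_num, ENNReal.log_ofReal_of_pos (by norm_num)]
  show ((Real.log 2 / (2 * N) : ℝ) : EReal) ≤ ENNReal.log (netMaxcard T F U n) / (n : EReal)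
  have h3 : ((J * Real.log 2 : ℝ) : EReal) ≤ ENNReal.log (netMaxcard T F U n) := by
    rw [EReal.coe_mul, EReal.coe_coe_eq_natCast, ← hlog2]
    exact h2
  have h4 : ((J * Real.log 2 : ℝ) : EReal) / (n : EReal) ≤
      ENNReal.log (netMaxcard T F U n) / (n : EReal) :=
    EReal.div_le_div_right_of_nonneg (Nat.cast_nonneg' n) h3
  refine le_trans ?_ h4
  rw [show ((n:ℕ) : EReal) = ((n : ℝ) : EReal) from (EReal.coe_coe_eq_natCast n).symm,
    ← EReal.coe_div, EReal.coe_le_coe_iff]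
  have hn0 : (0:ℝ) < n := by
    have : 0 < n := lt_of_lt_of_le hN hn
    exact_mod_cast this
  have hl2 : (0:ℝ) ≤ Real.log 2 := Real.log_nonneg (by norm_num)
  have hNleNJ : N ≤ N * J := Nat.le_mul_of_pos_right N hJ1
  have hmod : N * J + n % N = n := Nat.div_add_mod n N
  have hmodlt : n % N < N := Nat.mod_lt _ hN
  have h2n : (n:ℝ) ≤ 2 * N * J := by
    have h : n ≤ 2 * (N * J) := by omega
    calc (n:ℝ) ≤ ((2 * (N * J) : ℕ) : ℝ) := by exact_mod_cast h
      _ = 2 * N * J := by push_cast; ring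
  rw [div_le_div_iff₀ (by positivity) hn0]
  have hJr : (0:ℝ) ≤ (J:ℝ) := Nat.cast_nonneg J
  nlinarith [h2n, hl2, hJr]

lemma ediv_succ (n m : ℤ) (hm : 0 < m) :
    (n % m + 1 < m ∧ (n+1) % m = n % m + 1 ∧ (n+1)/m = n/m) ∨
    (n % m + 1 = m ∧ (n+1) % m = 0 ∧ (n+1)/m = n/m + 1) := by
  have h1 : n + 1 = m * (n / m) + (n % m + 1) := by
    have := Int.mul_ediv_add_emod n m; linarith
  have hnn := Int.emod_nonneg n (ne_of_gt hm)
  have hlt := Int.emod_lt_of_pos n hm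
  have hm0 : m ≠ 0 := ne_of_gt hm
  rcases lt_or_eq_of_le (by omega : n % m + 1 ≤ m) with h | h
  · left
    refine ⟨h, ?_, ?_⟩
    · rw [h1, add_comm (m * (n/m)), Int.add_mul_emod_self_left, Int.emod_eq_of_lt (by omega) h]
    · rw [h1, add_comm (m * (n/m)), mul_comm m (n/m), Int.add_mul_ediv_right _ _ hm0,
        Int.ediv_eq_zero_of_lt (by omega) h, zero_add]
  · right
    refine ⟨h, ?_, ?_⟩
    · rw [h1, add_comm (m * (n/m)), Int.add_mul_emod_self_left, h, Int.emod_self]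
    · rw [h1, h, show m * (n/m) + m = (n/m + 1) * m by ring, Int.mul_ediv_cancel _ hm0]

lemma horseshoe {M : Type*} [MetricSpace M] [CompactSpace M] (f : M ≃ₜ M)
    (K : Set M) (hKcomp : IsCompact K) (hKinf : K.Infinite) (hKinv : ⇑f '' K = K)
    (hnw : NonwanderingOn (⇑f) K)
    {e : ℝ} (he : 0 < e)
    (hexp' : ∀ x ∈ K, ∀ y ∈ K, x ≠ y → ∃ m : ℤ, e < dist (zIter f m x) (zIter f m y))
    (hsh : ∀ ε > (0 : ℝ), ∃ δ > (0 : ℝ), ∀ x : ℤ → M, (∀ m : ℤ, x m ∈ K) →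
      (∀ m : ℤ, dist (f (x m)) (x (m + 1)) ≤ δ) →
      ∃ y ∈ K, ∀ m : ℤ, dist (zIter f m y) (x m) ≤ ε) :
    ∃ c > (0:ℝ), ∃ N : ℕ, 0 < N ∧ ∀ J : ℕ, ∃ t : Finset M, t.card = 2^J ∧ (↑t : Set M) ⊆ K ∧
      ∀ x ∈ t, ∀ y ∈ t, x ≠ y → ∃ k : ℕ, k < N*J ∧ c ≤ dist (f^[k] x) (f^[k] y) := by
  -- shadowing at accuracy e/4
  obtain ⟨δ, hδ, hshad⟩ := hsh (e/4) (by linarith)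
  -- uniform continuity of f
  have huc := CompactSpace.uniformContinuous_of_continuous f.continuous
  rw [Metric.uniformContinuous_iff] at huc
  obtain ⟨η, hη, hηf⟩ := huc δ hδ
  -- the set of periodic points of K is infinite
  set P : Set M := {x | x ∈ K ∧ ∃ m : ℕ, 0 < m ∧ f^[m] x = x} with hPdef
  have hPK : P ⊆ K := fun x hx => hx.1
  have hPinf : P.Infinite := by
    by_contra h
    rw [Set.not_infinite] at h
    have hKsub : K ⊆ P := by
      intro x hx
      have hcl : x ∈ closure P := by
        rw [Metric.mem_closure_iff]
        intro r hr
        obtain ⟨p, hpK, hper, hd⟩ := periodic_dense f K hKinv hnw he hexp' hsh hx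
          (show (0:ℝ) < r/2 by linarith)
        exact ⟨p, ⟨hpK, hper⟩, by rw [dist_comm]; linarith⟩
      rwa [h.isClosed.closure_eq] at hcl
    exact hKinf (h.subset hKsub)
  -- two close distinct periodic points
  set ρ : ℝ := min (min δ (e/2)) (η/2) with hρdef
  have hρ : 0 < ρ := lt_min (lt_min hδ (by linarith)) (by linarith)
  obtain ⟨p, ⟨hpK, a, ha, hpa⟩, q, ⟨hqK, b, hb, hqb⟩, hpq, hdpq⟩ :=
    close_pair hPK hKcomp hPinf hρ
  have hρδ : ρ ≤ δ := le_trans (min_le_left _ _) (min_le_left _ _)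
  have hρe : ρ ≤ e/2 := le_trans (min_le_left _ _) (min_le_right _ _)
  have hρη : ρ ≤ η/2 := min_le_right _ _
  set N : ℕ := a * b with hNdef
  have hN : 0 < N := Nat.mul_pos ha hb
  have hpN : f^[N] p = p := (Function.IsPeriodicPt.mul_const hpa b : _)
  have hqN : f^[N] q = q := by
    have : Function.IsPeriodicPt (⇑f) (b * a) q := Function.IsPeriodicPt.mul_const hqb a
    rwa [hNdef, Nat.mul_comm a b]
  have hNz : (0:ℤ) < (N:ℤ) := by exact_mod_cast hN
  -- the separating time
  obtain ⟨k, hk⟩ := hexp' p hpK q hqK hpq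
  have hk' : e < dist (zIter f (k % (N:ℤ)) p) (zIter f (k % (N:ℤ)) q) := by
    rwa [zIter_emod f hpN k, zIter_emod f hqN k] at hk
  set r : ℤ := k % (N:ℤ) with hrdef
  have hr0 : 0 ≤ r := Int.emod_nonneg k (ne_of_gt hNz)
  have hrN : r < N := Int.emod_lt_of_pos k hNz
  have hrne : r ≠ 0 := by
    intro h
    rw [h, zIter_zero, zIter_zero] at hk'
    have : dist p q ≤ e/2 := le_trans hdpq hρe
    linarith
  set kn : ℕ := r.toNat with hkndef
  have hkn1 : 1 ≤ kn := by omega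
  have hknN : kn < N := by omega
  have hknr : (kn : ℤ) = r := Int.toNat_of_nonneg hr0
  have hsep0 : e < dist (f^[kn] p) (f^[kn] q) := by
    rw [← zIter_natCast, ← zIter_natCast, hknr]; exact hk'
  have hN2 : 2 ≤ N := by omega
  -- the pseudo-orbits
  set X : (ℤ → Bool) → ℤ → M := fun s n =>
    if s (n / (N:ℤ)) ∧ 0 < ((n % (N:ℤ)).toNat) then f^[(n % (N:ℤ)).toNat] q
    else f^[(n % (N:ℤ)).toNat] p with hXdef
  have hXmem : ∀ s n, X s n ∈ K := by
    intro s n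
    simp only [hXdef]
    split_ifs
    · exact iter_mem f hKinv hqK _
    · exact iter_mem f hKinv hpK _
  have hXjump : ∀ s n, dist (f (X s n)) (X s (n+1)) ≤ δ := by
    intro s n
    have hmodnn := Int.emod_nonneg n (ne_of_gt hNz)
    have hmodlt := Int.emod_lt_of_pos n hNz
    rcases ediv_succ n (N:ℤ) hNz with ⟨h1, h2, h3⟩ | ⟨h1, h2, h3⟩
    · -- within a block
      cases hsb : s (n / (N:ℤ)) with
      | false =>
          have hXn : X s n = f^[(n % (N:ℤ)).toNat] p := by
            simp only [hXdef, hsb]; simp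
          have hXn1 : X s (n+1) = f^[(n % (N:ℤ)).toNat + 1] p := by
            simp only [hXdef, h2, h3, hsb]
            simp only [Bool.false_eq_true, false_and, if_false]
            congr 1
            omega
          rw [hXn, hXn1, ← Function.iterate_succ_apply' f, dist_self]
          linarith
      | true =>
          rcases Nat.eq_zero_or_pos ((n % (N:ℤ)).toNat) with hz | hpos
          · have hXn : X s n = p := by
              simp only [hXdef, hz]; simp
            have hXn1 : X s (n+1) = f^[1] q := by
              simp only [hXdef, h2, h3, hsb]
              have : ((n % (N:ℤ)) + 1).toNat = (n % (N:ℤ)).toNat + 1 := by omega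
              rw [this, hz]
              simp
            rw [hXn, hXn1]
            have : dist p q < η := lt_of_le_of_lt hdpq (by linarith)
            have := hηf this
            simpa using le_of_lt this
          · have hXn : X s n = f^[(n % (N:ℤ)).toNat] q := by
              simp only [hXdef, hsb]
              rw [if_pos ⟨by simp [hsb], hpos⟩]
            have hXn1 : X s (n+1) = f^[(n % (N:ℤ)).toNat + 1] q := by
              simp only [hXdef, h2, h3, hsb]
              rw [if_pos]
              · congr 1; omega
              · exact ⟨by simp [hsb], by omega⟩
            rw [hXn, hXn1, ← Function.iterate_succ_apply' f, dist_self]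
            linarith
    · -- block boundary
      have hXn1 : X s (n+1) = p := by
        simp only [hXdef, h2]
        simp
      cases hsb : s (n / (N:ℤ)) with
      | false =>
          have hXn : X s n = f^[(n % (N:ℤ)).toNat] p := by
            simp only [hXdef, hsb]; simp
          have hlast : ((n % (N:ℤ)).toNat).succ = N := by omega
          rw [hXn, hXn1, ← Function.iterate_succ_apply' f, hlast, hpN, dist_self]
          linarith
      | true =>
          have hpos : 0 < (n % (N:ℤ)).toNat := by omega
          have hXn : X s n = f^[(n % (N:ℤ)).toNat] q := by
            simp only [hXdef, hsb]
            rw [if_pos ⟨by simp [hsb], hpos⟩]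
          have hlast : ((n % (N:ℤ)).toNat).succ = N := by omega
          rw [hXn, hXn1, ← Function.iterate_succ_apply' f, hlast, hqN]
          rw [dist_comm]
          linarith
  -- the shadowing points
  choose Y hYK hY using fun s => hshad (X s) (hXmem s) (hXjump s)
  -- separation of shadows
  have hsepY : ∀ s s' : ℤ → Bool, ∀ j : ℤ, s j ≠ s' j →
      e/2 ≤ dist (zIter f ((kn:ℤ) + (N:ℤ)*j) (Y s)) (zIter f ((kn:ℤ) + (N:ℤ)*j) (Y s')) := by
    intro s s' j hj
    set n : ℤ := (kn:ℤ) + (N:ℤ)*j with hndef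
    have hmod : n % (N:ℤ) = (kn:ℤ) := by
      rw [hndef, Int.add_mul_emod_self_left, Int.emod_eq_of_lt (by omega) (by exact_mod_cast hknN)]
    have hdiv : n / (N:ℤ) = j := by
      rw [hndef, Int.add_mul_ediv_left _ _ (ne_of_gt hNz),
        Int.ediv_eq_zero_of_lt (by omega) (by exact_mod_cast hknN), zero_add]
    have htn : (n % (N:ℤ)).toNat = kn := by rw [hmod]; exact Int.toNat_natCast kn
    have hXval : dist (X s n) (X s' n) = dist (f^[kn] p) (f^[kn] q) ∨
        dist (X s n) (X s' n) = dist (f^[kn] q) (f^[kn] p) := by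
      have hknpos : 0 < kn := hkn1
      cases hs1 : s j with
      | true =>
          cases hs2 : s' j with
          | true => exact absurd (hs1.trans hs2.symm) hj
          | false =>
              right
              simp only [hXdef, hdiv, htn, hs1, hs2]
              rw [if_pos ⟨by simp [hs1], by omega⟩, if_neg (by simp [hs2])]
      | false =>
          cases hs2 : s' j with
          | false => exact absurd (hs1.trans hs2.symm) hj
          | true =>
              left
              simp only [hXdef, hdiv, htn, hs1, hs2]
              rw [if_neg (by simp [hs1]), if_pos ⟨by simp [hs2], by omega⟩]
    have hXd : e < dist (X s n) (X s' n) := by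
      rcases hXval with h | h
      · rw [h]; exact hsep0
      · rw [h, dist_comm]; exact hsep0
    have h1 := hY s n
    have h2 := hY s' n
    have htri : dist (X s n) (X s' n) ≤ dist (zIter f n (Y s)) (X s n) +
        dist (zIter f n (Y s)) (zIter f n (Y s')) + dist (zIter f n (Y s')) (X s' n) := by
      have t1 := dist_triangle4 (X s n) (zIter f n (Y s)) (zIter f n (Y s')) (X s' n)
      rwa [dist_comm (X s n) (zIter f n (Y s))] at t1
    have hfin : e < dist (zIter f n (Y s)) (X s n) + dist (zIter f n (Y s)) (zIter f n (Y s')) +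
        dist (zIter f n (Y s')) (X s' n) := lt_of_lt_of_le hXd htri
    linarith
  -- conclusion
  refine ⟨e/2, by linarith, N, hN, fun J => ?_⟩
  classical
  set ext : (Fin J → Bool) → ℤ → Bool := fun σ n =>
    if h : 0 ≤ n ∧ n < (J:ℤ) then σ ⟨n.toNat, by omega⟩ else false with hextdef
  have hext : ∀ σ (i : Fin J), ext σ (i : ℤ) = σ i := by
    intro σ i
    have hi : (0:ℤ) ≤ ((i:ℕ):ℤ) ∧ ((i:ℕ):ℤ) < (J:ℤ) := by
      constructor
      · positivity
      · exact_mod_cast i.isLt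
    simp only [hextdef, dif_pos hi, Int.toNat_natCast]
  set Φ : (Fin J → Bool) → M := fun σ => Y (ext σ) with hΦdef
  have hΦsep : ∀ σ σ' : Fin J → Bool, σ ≠ σ' → ∃ k : ℕ, k < N*J ∧
      e/2 ≤ dist (f^[k] (Φ σ)) (f^[k] (Φ σ')) := by
    intro σ σ' hne
    have : ∃ i : Fin J, σ i ≠ σ' i := by
      by_contra h
      push_neg at h
      exact hne (funext h)
    obtain ⟨i, hi⟩ := this
    have hji : ext σ (i:ℤ) ≠ ext σ' (i:ℤ) := by rw [hext, hext]; exact hi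
    have := hsepY (ext σ) (ext σ') (i:ℤ) hji
    refine ⟨kn + N*(i:ℕ), ?_, ?_⟩
    · have := i.isLt
      calc kn + N*(i:ℕ) < N + N*(i:ℕ) := by omega
        _ = N*((i:ℕ)+1) := by ring
        _ ≤ N*J := by
            have : (i:ℕ)+1 ≤ J := i.isLt
            exact Nat.mul_le_mul_left N this
    · have hcast : ((kn + N*(i:ℕ) : ℕ) : ℤ) = (kn:ℤ) + (N:ℤ)*((i:ℕ):ℤ) := by push_cast; ring
      rw [← zIter_natCast, ← zIter_natCast, hcast]
      exact this
  have hΦinj : Function.Injective Φ := by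
    intro σ σ' h
    by_contra hne
    obtain ⟨k, _, hk2⟩ := hΦsep σ σ' hne
    rw [h, dist_self] at hk2
    linarith
  refine ⟨Finset.image Φ Finset.univ, ?_, ?_, ?_⟩
  · rw [Finset.card_image_of_injective _ hΦinj, Finset.card_univ]
    simp
  · intro x hx
    simp only [Finset.coe_image, Set.mem_image] at hx
    obtain ⟨σ, _, rfl⟩ := hx
    exact hYK (ext σ)
  · intro x hx y hy hxy
    simp only [Finset.mem_image] at hx hy
    obtain ⟨σ, _, rfl⟩ := hx
    obtain ⟨σ', _, rfl⟩ := hy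
    exact hΦsep σ σ' (fun h => hxy (by rw [h]))

/-- If `f` is a homeomorphism of a compact metric space and `K` is an infinite compact
`f`-invariant set on which `f` is nonwandering, expansive and has the shadowing property,
then `h(f, K) > 0`; in particular the topological entropy of `f` is positive. -/
theorem entropy_pos_of_nonwandering_expansive_shadowing
    {M : Type*} [MetricSpace M] [CompactSpace M] (f : M ≃ₜ M)
    (K : Set M) (hKcomp : IsCompact K) (hKinf : K.Infinite) (hKinv : ⇑f '' K = K)
    (hnw : NonwanderingOn (⇑f) K) (hexp : ExpansiveOn f K) (hsh : ShadowingOn f K) :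
    0 < netEntropy (⇑f) K ∧ 0 < netEntropy (⇑f) Set.univ := by
  obtain ⟨e, he, hexp'⟩ := hexp
  obtain ⟨c, hc, N, hN, hts⟩ := horseshoe f K hKcomp hKinf hKinv hnw he hexp' hsh
  set U : Set (M × M) := {p : M × M | dist p.1 p.2 < c/2} with hUdef
  have hUuni : U ∈ uniformity M := Metric.dist_mem_uniformity (by linarith)
  have hnet : ∀ F : Set M, K ⊆ F → ∀ J : ℕ, (2^J : ℕ∞) ≤ netMaxcard (⇑f) F U (N*J) := by
    intro F hKF J
    obtain ⟨t, hcard, htK, hsep⟩ := hts J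
    have hdyn : IsDynNetIn (⇑f) F U (N*J) ↑t := by
      constructor
      · exact subset_trans htK hKF
      · intro x hx y hy hxy
        simp only [Function.onFun]
        rw [Set.disjoint_left]
        intro w hwx hwy
        obtain ⟨k, hkJ, hkd⟩ := hsep x (Finset.mem_coe.mp hx) y (Finset.mem_coe.mp hy) hxy
        have h1 : ((⇑f)^[k] x, (⇑f)^[k] w) ∈ U := by
          have : (x, w) ∈ dynEntourage (⇑f) U (N*J) := hwx
          rw [mem_dynEntourage] at this
          exact this k hkJ
        have h2 : ((⇑f)^[k] y, (⇑f)^[k] w) ∈ U := by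
          have : (y, w) ∈ dynEntourage (⇑f) U (N*J) := hwy
          rw [mem_dynEntourage] at this
          exact this k hkJ
        simp only [hUdef, Set.mem_setOf_eq] at h1 h2
        have htri : dist ((⇑f)^[k] x) ((⇑f)^[k] y) ≤
            dist ((⇑f)^[k] x) ((⇑f)^[k] w) + dist ((⇑f)^[k] y) ((⇑f)^[k] w) := by
          rw [dist_comm ((⇑f)^[k] y) ((⇑f)^[k] w)]
          exact dist_triangle _ _ _
        linarith
    have hle := hdyn.card_le_netMaxcard
    rw [hcard] at hle
    calc (2^J : ℕ∞) = ((2^J : ℕ) : ℕ∞) := by push_cast; rfl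
      _ ≤ netMaxcard (⇑f) F U (N*J) := hle
  have hent : ∀ F : Set M, K ⊆ F →
      ((Real.log 2 / (2*N) : ℝ) : EReal) ≤ netEntropyEntourage (⇑f) F U :=
    fun F hKF => entropy_bound (⇑f) F U N hN (hnet F hKF)
  have hpos : (0:EReal) < ((Real.log 2 / (2*N) : ℝ) : EReal) := by
    rw [EReal.coe_pos]
    have h2 : (0:ℝ) < Real.log 2 := Real.log_pos one_lt_two
    have hNr : (0:ℝ) < (N:ℝ) := by exact_mod_cast hN
    positivity
  have final : ∀ F : Set M, K ⊆ F → 0 < netEntropy (⇑f) F := by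
    intro F hKF
    apply lt_of_lt_of_le hpos
    refine le_trans (hent F hKF) ?_
    exact le_iSup₂ (f := fun (V : Set (M × M)) (_ : V ∈ uniformity M) =>
      netEntropyEntourage (⇑f) F V) U hUuni
  exact ⟨final K (subset_refl K), final Set.univ (Set.subset_univ K)⟩
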